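/- Let H₁, H₂ : A' → ℝ be Lipschitz functions on an open simply connected set A' ⊆ ℝ², and set b₁ := ∇^⊥ H₁ = (-∂₂H₁, ∂₁H₁). If ∇H₁ and ∇H₂ are parallel a.e. on A', then div(H₂ b₁) = 0 in the sense of distributions on A', i.e. ∫_{A'} H₂ (b₁ · ∇φ) dx = 0 for every Lipschitz φ with compact support in A'. -/

import Mathlib

/-!
By the product rule, `H₂ ∇^⊥H₁ · ∇φ = ∇^⊥H₁ · ∇(H₂ φ) - φ ∇^⊥H₁ · ∇H₂` a.e., and the last term
vanishes because the gradients are parallel. So it suffices that `∫ ∇^⊥F · ∇ψ = 0` for Lipschitz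
`F` and compactly supported Lipschitz `ψ`, i.e. that the weak mixed derivatives of Lipschitz
functions commute. For difference quotients in directions `v, w` this is an exact identity, by
translation invariance of Lebesgue measure; dominated convergence and Rademacher's theorem pass it
to the limit.
-/

open MeasureTheory Set Metric Filter Topology NNReal

section Translation

variable {E : Type*} [NormedAddCommGroup E] [MeasurableSpace E] [BorelSpace E]
  {μ : Measure E} [μ.IsAddRightInvariant] [IsFiniteMeasureOnCompacts μ] {f g : E → ℝ}

lemma integral_sub_comp_add_mul_sub_comp_add (hf : Continuous f) (hg : Continuous g)
    (hgc : HasCompactSupport g) (a b : E) :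
    ∫ x, (f (x + a) - f x) * (g (x + b) - g x) ∂μ =
      ∫ x, (f (x + -b) - f x) * (g (x + -a) - g x) ∂μ := by
  let I a b := ∫ x, f (x + a) * g (x + b) ∂μ
  have shift (a b c : E) : I (a + c) (b + c) = I a b := by
    simpa only [add_assoc, add_comm c] using integral_add_right_eq_self (μ := μ)
      (fun y ↦ f (y + a) * g (y + b)) c
  have hint (a b : E) : Integrable (fun x ↦ f (x + a) * g (x + b)) μ :=
    ((hf.comp (continuous_add_const a)).mul (hg.comp (continuous_add_const b)))
      |>.integrable_of_hasCompactSupport (hgc.comp_homeomorph (Homeomorph.addRight b)).mul_left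
  have expand (a b : E) :
      ∫ x, (f (x + a) - f x) * (g (x + b) - g x) ∂μ = I a b - I a 0 - (I 0 b - I 0 0) := by
    simp only [I]
    rw [← integral_sub (hint _ _) (hint _ _), ← integral_sub (hint _ _) (hint _ _),
      ← integral_sub ((hint _ _).sub' (hint _ _)) ((hint _ _).sub' (hint _ _))]
    congr 1 with x
    simp only [add_zero]
    ring
  rw [expand, expand, ← shift a b (-b - a), ← shift a 0 (-a), ← shift 0 b (-b), show a + (-b - a) = -b by abel, show b + (-b - a) = -a by abel, add_neg_cancel,
    add_neg_cancel, zero_add, zero_add]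
  ring

end Translation

section DifferenceQuotients

variable {E : Type*} [NormedAddCommGroup E] [NormedSpace ℝ E] {f g : E → ℝ} {C D : ℝ≥0}

lemma LipschitzWith.norm_slope_le (hf : LipschitzWith C f) (x v : E) {t : ℝ} (ht : 0 < t) :
    ‖t⁻¹ • (f (x + t • v) - f x)‖ ≤ C * ‖v‖ := by
  calc ‖t⁻¹ • (f (x + t • v) - f x)‖ = t⁻¹ * ‖f (x + t • v) - f x‖ := by
        rw [norm_smul, Real.norm_of_nonneg (inv_nonneg.2 ht.le)]
    _ ≤ t⁻¹ * (C * ‖(x + t • v) - x‖) := by gcongr; exact hf.norm_sub_le _ _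
    _ = C * ‖v‖ := by simp [field, norm_smul, abs_of_pos ht]

lemma sub_comp_add_smul_eq_zero_of_notMem_cthickening {x v : E}
    (hx : x ∉ cthickening ‖v‖ (tsupport g)) {t : ℝ} (ht : t ∈ Icc (0 : ℝ) 1) :
    g (x + t • v) - g x = 0 := by
  have h₀ : x ∉ tsupport g := fun h ↦ hx (self_subset_cthickening _ h)
  have h₁ : x + t • v ∉ tsupport g := fun h ↦ hx <| mem_cthickening_of_dist_le _ _ _ _ h <| by
    rw [dist_self_add_right, norm_smul, Real.norm_of_nonneg ht.1]
    exact mul_le_of_le_one_left (norm_nonneg v) ht.2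
  rw [image_eq_zero_of_notMem_tsupport h₀, image_eq_zero_of_notMem_tsupport h₁, sub_zero]

variable [MeasurableSpace E] [BorelSpace E] {μ : Measure E}

lemma integrable_fderiv_apply_mul_fderiv_apply [IsFiniteMeasureOnCompacts μ]
    (hf : LipschitzWith C f) (hg : LipschitzWith D g) (hgc : HasCompactSupport g) (v w : E) :
    Integrable (fun x ↦ fderiv ℝ f x v * fderiv ℝ g x w) μ := by
  have hsupp : Function.support (fun x ↦ fderiv ℝ f x v * fderiv ℝ g x w) ⊆ tsupport g := by
    intro x hx
    by_contra h
    simp [fderiv_of_notMem_tsupport ℝ h] at hx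
  rw [← integrableOn_iff_integrable_of_support_subset hsupp]
  have hmeas := (measurable_fderiv_apply_const ℝ f v).mul (measurable_fderiv_apply_const ℝ g w)
  refine Measure.integrableOn_of_bounded (M := C * ‖v‖ * (D * ‖w‖))
    hgc.isCompact.measure_lt_top.ne hmeas.aestronglyMeasurable (.of_forall fun x ↦ ?_)
  rw [norm_mul]
  exact mul_le_mul ((fderiv ℝ f x).le_of_opNorm_le (norm_fderiv_le_of_lipschitz ℝ hf) v)
    ((fderiv ℝ g x).le_of_opNorm_le (norm_fderiv_le_of_lipschitz ℝ hg) w) (norm_nonneg _)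
    (by positivity)

variable [FiniteDimensional ℝ E] [μ.IsAddHaarMeasure]

theorem tendsto_integral_slope_mul_slope (hf : LipschitzWith C f) (hg : LipschitzWith D g)
    (hgc : HasCompactSupport g) (v w : E) :
    Tendsto (fun t : ℝ ↦ ∫ x, t⁻¹ • (f (x + t • v) - f x) * t⁻¹ • (g (x + t • w) - g x) ∂μ)
      (𝓝[>] 0) (𝓝 (∫ x, fderiv ℝ f x v * fderiv ℝ g x w ∂μ)) := by
  set K := cthickening ‖w‖ (tsupport g)
  have hK : IsCompact K := hgc.cthickening
  have hf_cont := hf.continuous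
  have hg_cont := hg.continuous
  apply tendsto_integral_filter_of_dominated_convergence (K.indicator fun _ ↦ C * ‖v‖ * (D * ‖w‖))
  · exact .of_forall fun t ↦ Continuous.aestronglyMeasurable (by fun_prop)
  · filter_upwards [Ioc_mem_nhdsGT zero_lt_one] with t ht
    refine .of_forall fun x ↦ ?_
    by_cases hx : x ∈ K
    · rw [indicator_of_mem hx, norm_mul]
      exact mul_le_mul (hf.norm_slope_le x v ht.1) (hg.norm_slope_le x w ht.1) (norm_nonneg _)
        (by positivity)
    · rw [indicator_of_notMem hx,
        sub_comp_add_smul_eq_zero_of_notMem_cthickening hx (Ioc_subset_Icc_self ht)]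
      simp
  · rw [integrable_indicator_iff hK.measurableSet]
    exact integrableOn_const hK.measure_lt_top.ne
  · filter_upwards [hf.ae_differentiableAt, hg.ae_differentiableAt] with x hfx hgx
    exact ((hfx.hasFDerivAt.hasLineDerivAt v).tendsto_slope_zero_right).mul
      (hgx.hasFDerivAt.hasLineDerivAt w).tendsto_slope_zero_right

theorem integral_fderiv_mul_fderiv_comm (hf : LipschitzWith C f) (hg : LipschitzWith D g)
    (hgc : HasCompactSupport g) (v w : E) :
    ∫ x, fderiv ℝ f x v * fderiv ℝ g x w ∂μ = ∫ x, fderiv ℝ f x w * fderiv ℝ g x v ∂μ := by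
  have hvw := tendsto_integral_slope_mul_slope (μ := μ) hf hg hgc v w
  have hwv := tendsto_integral_slope_mul_slope (μ := μ) hf hg hgc (-w) (-v)
  simp only [map_neg, neg_mul_neg] at hwv
  refine tendsto_nhds_unique (hvw.congr fun t ↦ ?_) hwv
  have hsmul (a b : ℝ) : t⁻¹ • a * t⁻¹ • b = (t⁻¹ * t⁻¹) * (a * b) := by
    simp only [smul_eq_mul]; ring
  simp only [hsmul, integral_const_mul, smul_neg]
  rw [integral_sub_comp_add_mul_sub_comp_add hf.continuous hg.continuous hgc]

end DifferenceQuotients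

lemma LipschitzOnWith.exists_lipschitzWith_mul {X : Type*} [PseudoMetricSpace X] {f g : X → ℝ}
    {K D : ℝ≥0} {s : Set X} (hf : LipschitzOnWith K f s) (hg : LipschitzWith D g)
    (hgc : HasCompactSupport g) (hs : tsupport g ⊆ s) :
    ∃ K' : ℝ≥0, LipschitzWith K' fun x ↦ f x * g x := by
  obtain ⟨M, hM⟩ := hgc.isCompact.exists_bound_of_continuousOn (hf.continuousOn.mono hs)
  obtain ⟨N, hN⟩ := hg.continuous.bounded_above_of_compact_support hgc
  set L := max M 0 * D + N * K
  have key : ∀ x ∈ tsupport g, ∀ y, dist (f x * g x) (f y * g y) ≤ L * dist x y := by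
    intro x hx y
    have hfx : |f x| ≤ max M 0 := (hM x hx).trans (le_max_left _ _)
    have hgxy : |g x - g y| ≤ D * dist x y := by simpa [Real.dist_eq] using hg.dist_le_mul x y
    rw [Real.dist_eq]
    by_cases hy : y ∈ tsupport g
    · have hfxy : |f x - f y| ≤ K * dist x y := by
        simpa [Real.dist_eq] using hf.dist_le_mul x (hs hx) y (hs hy)
      calc |f x * g x - f y * g y| = |f x * (g x - g y) + g y * (f x - f y)| := by ring_nf
        _ ≤ |f x| * |g x - g y| + |g y| * |f x - f y| := by
          rw [← abs_mul, ← abs_mul]; exact abs_add_le _ _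
        _ ≤ max M 0 * (D * dist x y) + N * (K * dist x y) := by
          gcongr
          · exact (abs_nonneg _).trans (hN y)
          · exact hN y
        _ = L * dist x y := by ring
    · calc |f x * g x - f y * g y| = |f x| * |g x - g y| := by
            rw [image_eq_zero_of_notMem_tsupport hy, ← abs_mul]; ring_nf
        _ ≤ max M 0 * (D * dist x y) := by gcongr
        _ ≤ max M 0 * (D * dist x y) + N * (K * dist x y) :=
          le_add_of_nonneg_right (mul_nonneg ((norm_nonneg _).trans (hN y)) (by positivity))
        _ = L * dist x y := by ring
  refine ⟨L.toNNReal, LipschitzWith.of_dist_le' fun x y ↦ ?_⟩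
  by_cases hx : x ∈ tsupport g
  · exact key x hx y
  by_cases hy : y ∈ tsupport g
  · rw [dist_comm, dist_comm x]; exact key y hy x
  have : 0 ≤ N := (norm_nonneg _).trans (hN y)
  simp only [image_eq_zero_of_notMem_tsupport hx, image_eq_zero_of_notMem_tsupport hy, mul_zero,
    dist_self]
  positivity

section Planar

/-- `wedge (dH) (dφ) = det (∇H, ∇φ) = ∇^⊥H · ∇φ`. -/
def wedge (L M : ℝ × ℝ →L[ℝ] ℝ) : ℝ := L (1, 0) * M (0, 1) - L (0, 1) * M (1, 0)

lemma apply_perp_eq_wedge (L M : ℝ × ℝ →L[ℝ] ℝ) : M (-L (0, 1), L (1, 0)) = wedge L M := by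
  have : ((-L (0, 1), L (1, 0)) : ℝ × ℝ) = (-L (0, 1)) • ((1 : ℝ), (0 : ℝ)) + L (1, 0) • (0, 1) :=
    by simp
  rw [this, map_add, map_smul, map_smul, wedge, smul_eq_mul, smul_eq_mul]
  ring

lemma wedge_smul_add_smul (L M N : ℝ × ℝ →L[ℝ] ℝ) (a b : ℝ) :
    wedge L (a • M + b • N) = a * wedge L M + b * wedge L N := by
  simp only [wedge, add_apply, smul_apply, smul_eq_mul]
  ring

variable {f g : ℝ × ℝ → ℝ} {C D : ℝ≥0}

theorem integral_wedge_fderiv_eq_zero (hf : LipschitzWith C f) (hg : LipschitzWith D g)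
    (hgc : HasCompactSupport g) : ∫ x, wedge (fderiv ℝ f x) (fderiv ℝ g x) = 0 := by
  simp only [wedge]
  rw [integral_sub (integrable_fderiv_apply_mul_fderiv_apply hf hg hgc _ _)
    (integrable_fderiv_apply_mul_fderiv_apply hf hg hgc _ _),
    integral_fderiv_mul_fderiv_comm hf hg hgc, sub_self]

lemma ae_mul_apply_perp_eq_wedge_fderiv_mul {A : Set (ℝ × ℝ)} (hA : IsOpen A)
    {H₁ H₂ F φ : ℝ × ℝ → ℝ} {K : ℝ≥0} (hF : EqOn H₁ F A) (hH₂ : LipschitzOnWith K H₂ A)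
    (hφ : LipschitzWith C φ) (hφA : tsupport φ ⊆ A)
    (hpar : ∀ᵐ x ∂volume.restrict A, wedge (fderiv ℝ H₁ x) (fderiv ℝ H₂ x) = 0) :
    (fun x ↦ H₂ x * fderiv ℝ φ x (-fderiv ℝ H₁ x (0, 1), fderiv ℝ H₁ x (1, 0)))
      =ᵐ[volume] fun x ↦ wedge (fderiv ℝ F x) (fderiv ℝ (fun y ↦ H₂ y * φ y) x) := by
  rw [ae_restrict_iff' hA.measurableSet] at hpar
  filter_upwards [hpar, hH₂.ae_differentiableWithinAt_of_mem, hφ.ae_differentiableAt]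
    with x hx hH₂x hφx
  by_cases hxA : x ∈ A
  · have hA_nhds := hA.mem_nhds hxA
    rw [apply_perp_eq_wedge, ← (hF.eventuallyEq_of_mem hA_nhds).fderiv_eq,
      fderiv_fun_mul ((hH₂x hxA).differentiableAt hA_nhds) hφx, wedge_smul_add_smul, hx hxA,
      mul_zero, add_zero]
  · have hxφ : x ∉ tsupport φ := fun h ↦ hxA (hφA h)
    have hxψ : x ∉ tsupport fun y ↦ H₂ y * φ y := fun h ↦ hxφ (tsupport_mul_subset_right h)
    simp [fderiv_of_notMem_tsupport ℝ hxφ, fderiv_of_notMem_tsupport ℝ hxψ, wedge]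

end Planar

theorem stmt5_general (A' : Set (ℝ × ℝ)) (hA : IsOpen A')
    (H₁ H₂ : ℝ × ℝ → ℝ) (K₁ K₂ : NNReal)
    (h₁ : LipschitzOnWith K₁ H₁ A') (h₂ : LipschitzOnWith K₂ H₂ A')
    (hpar : ∀ᵐ x ∂(volume.restrict A'),
      fderiv ℝ H₁ x (1, 0) * fderiv ℝ H₂ x (0, 1)
        - fderiv ℝ H₁ x (0, 1) * fderiv ℝ H₂ x (1, 0) = 0) :
    ∀ φ : ℝ × ℝ → ℝ, (∃ K : NNReal, LipschitzWith K φ) → HasCompactSupport φ →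
      tsupport φ ⊆ A' →
      ∫ x in A',
        H₂ x * fderiv ℝ φ x (-(fderiv ℝ H₁ x (0, 1)), fderiv ℝ H₁ x (1, 0)) = 0 := by
  rintro φ ⟨Kφ, hφ⟩ hφc hφA
  obtain ⟨F, hF, hH₁F⟩ := h₁.extend_real
  obtain ⟨Kψ, hψ⟩ := (h₂.mono hφA).exists_lipschitzWith_mul hφ hφc subset_rfl
  have hφ_deriv_outside (x) (hx : x ∉ A') : fderiv ℝ φ x = 0 :=
    fderiv_of_notMem_tsupport ℝ fun h ↦ hx (hφA h)
  rw [setIntegral_eq_integral_of_forall_compl_eq_zero fun x hx ↦ by simp [hφ_deriv_outside x hx],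
    integral_congr_ae (ae_mul_apply_perp_eq_wedge_fderiv_mul hA hH₁F h₂ hφ hφA hpar)]
  exact integral_wedge_fderiv_eq_zero hF hψ hφc.mul_left

/-- Matching lemma, key step. If `H₁, H₂` are Lipschitz on an open simply
connected `A' ⊆ ℝ²` and `∇H₁ ∥ ∇H₂` a.e. on `A'` (vanishing 2D cross product), then
`div (H₂ ∇^⊥H₁) = 0` in `D'(A')`: for every compactly supported Lipschitz test function `φ`
with support in `A'`, `∫_{A'} H₂ (∇^⊥H₁ · ∇φ) = 0`. -/
theorem stmt5 (A' : Set (ℝ × ℝ)) (hA : IsOpen A') [SimplyConnectedSpace A']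
    (H₁ H₂ : ℝ × ℝ → ℝ) (K₁ K₂ : NNReal)
    (h₁ : LipschitzOnWith K₁ H₁ A') (h₂ : LipschitzOnWith K₂ H₂ A')
    (hpar : ∀ᵐ x ∂(volume.restrict A'),
      fderiv ℝ H₁ x (1, 0) * fderiv ℝ H₂ x (0, 1)
        - fderiv ℝ H₁ x (0, 1) * fderiv ℝ H₂ x (1, 0) = 0) :
    ∀ φ : ℝ × ℝ → ℝ, (∃ K : NNReal, LipschitzWith K φ) → HasCompactSupport φ →
      tsupport φ ⊆ A' →
      ∫ x in A',
        H₂ x * fderiv ℝ φ x (-(fderiv ℝ H₁ x (0, 1)), fderiv ℝ H₁ x (1, 0)) = 0 :=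
  stmt5_general A' hA H₁ H₂ K₁ K₂ h₁ h₂ hpar
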